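/- Let 0 < α < 1 and fix δ > 0 and s ∈ ℂ with |arg(s^α)| ≤ πα/2 and s ≠ 0. Define f_α(δ) = ∫₀^∞ t^α e^{-t} / (t^{2α} − 2 δ^α t^α s^α cos(απ) + (δ s)^{2α}) dt. Then f_α(δ) converges and lim_{δ → 0⁺} f_α(δ) = Γ(1 − α). -/

import Mathlib

open Real MeasureTheory Set Filter

private lemma cos_le_cos_aux {x y : ℝ} (hy0 : 0 ≤ y) (hyπ : y ≤ π) (h1 : y ≤ x)
    (h2 : x ≤ 2 * π - y) : Real.cos x ≤ Real.cos y := by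
  rcases le_total x π with hx | hx
  · exact Real.cos_le_cos_of_nonneg_of_le_pi hy0 hx h1
  · rw [← Real.cos_two_pi_sub x]
    exact Real.cos_le_cos_of_nonneg_of_le_pi hy0 (by linarith) (by linarith)

private lemma abs_sub_lower {x : ℝ} (hx : 0 ≤ x) {a : ℂ} {φ : ℝ}
    (h : a.re ≤ ‖a‖ * Real.cos φ) (hφ : 0 ≤ Real.sin φ) :
    x * Real.sin φ ≤ ‖(x : ℂ) - a‖ := by
  have hA : 0 ≤ ‖a‖ := norm_nonneg a
  have hnorm : a.re ^ 2 + a.im ^ 2 = (‖a‖) ^ 2 := by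
    rw [Complex.sq_norm, Complex.normSq_apply]; ring
  have hsc : Real.sin φ ^ 2 + Real.cos φ ^ 2 = 1 := Real.sin_sq_add_cos_sq φ
  have h1 : (x * Real.sin φ) ^ 2 ≤ (‖(x : ℂ) - a‖) ^ 2 := by
    rw [Complex.sq_norm, Complex.normSq_apply]
    simp only [Complex.sub_re, Complex.sub_im, Complex.ofReal_re, Complex.ofReal_im]
    have h2 : x ^ 2 * Real.sin φ ^ 2 + x ^ 2 * Real.cos φ ^ 2 = x ^ 2 := by
      rw [← mul_add, hsc, mul_one]
    nlinarith [sq_nonneg (x * Real.cos φ - ‖a‖),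
      mul_le_mul_of_nonneg_left h hx]
  exact le_of_pow_le_pow_left₀ two_ne_zero (norm_nonneg _) h1

private lemma denom_bound {α : ℝ} (hα : 0 < α) (hα' : α < 1) {w : ℂ} (hw : w ≠ 0)
    (harg : |w.arg| ≤ π * α / 2) {X d : ℝ} (hX : 0 ≤ X) (hd : 0 ≤ d) :
    X ^ 2 * Real.sin (α * π / 2) ^ 2 ≤
      ‖(X : ℂ) ^ 2 - 2 * (d : ℂ) * (X : ℂ) * w * (Real.cos (α * π) : ℂ)
        + (d : ℂ) ^ 2 * w ^ 2‖ := by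
  have hπ := Real.pi_pos
  set ψ := w.arg with hψ
  have hψ1 : -(α * π / 2) ≤ ψ := by
    have := abs_le.mp harg; linarith [this.1]
  have hψ2 : ψ ≤ α * π / 2 := by
    have := abs_le.mp harg; linarith [this.2]
  have hwabs : 0 < ‖w‖ := norm_pos_iff.mpr hw
  have hre : w.re = ‖w‖ * Real.cos ψ := by
    rw [Complex.cos_arg hw]; field_simp
  have him : w.im = ‖w‖ * Real.sin ψ := by
    rw [Complex.sin_arg]; field_simp
  set e : ℂ := ⟨Real.cos (α * π), Real.sin (α * π)⟩ with he
  have he_re : e.re = Real.cos (α * π) := rfl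
  have he_im : e.im = Real.sin (α * π) := rfl
  have he1 : e * (starRingEnd ℂ) e = 1 := by
    rw [Complex.mul_conj]
    norm_cast
    rw [Complex.normSq_apply, he_re, he_im, ← Real.cos_sq_add_sin_sq (α * π)]
    ring
  have he2 : e + (starRingEnd ℂ) e = 2 * (Real.cos (α * π) : ℂ) := by
    rw [Complex.add_conj, he_re]
    push_cast
    ring
  have hfact : (X : ℂ) ^ 2 - 2 * (d : ℂ) * (X : ℂ) * w * (Real.cos (α * π) : ℂ)
      + (d : ℂ) ^ 2 * w ^ 2
      = ((X : ℂ) - (d : ℂ) * w * e) * ((X : ℂ) - (d : ℂ) * w * ((starRingEnd ℂ) e)) := by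
    linear_combination ((X : ℂ) * (d : ℂ) * w) * he2 - (d : ℂ) ^ 2 * w ^ 2 * he1
  rw [hfact, norm_mul]
  set φ := α * π / 2 with hφ
  have hsφ : 0 ≤ Real.sin φ := Real.sin_nonneg_of_nonneg_of_le_pi (by positivity) (by nlinarith)
  -- bounds for re parts
  have habse : ‖e‖ = 1 := by
    rw [Complex.norm_def, Complex.normSq_apply, he_re, he_im]
    rw [show Real.cos (α*π) * Real.cos (α*π) + Real.sin (α*π) * Real.sin (α*π) = 1 by
      nlinarith [Real.cos_sq_add_sin_sq (α*π)]]
    exact Real.sqrt_one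
  have h1 : ((d : ℂ) * w * e).re ≤ ‖(d : ℂ) * w * e‖ * Real.cos φ := by
    have hre1 : ((d : ℂ) * w * e).re = d * (‖w‖ * Real.cos (ψ + α * π)) := by
      simp [Complex.mul_re, Complex.ofReal_re, Complex.ofReal_im, he_re, he_im,
        Real.cos_add, hre, him]
      ring
    have habs1 : ‖(d : ℂ) * w * e‖ = d * ‖w‖ := by
      rw [norm_mul, norm_mul, habse, Complex.norm_real, Real.norm_eq_abs, abs_of_nonneg hd, mul_one]
    rw [hre1, habs1, mul_assoc]
    apply mul_le_mul_of_nonneg_left _ hd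
    apply mul_le_mul_of_nonneg_left _ hwabs.le
    exact cos_le_cos_aux (by positivity) (by nlinarith) (by linarith) (by nlinarith)
  have h2 : ((d : ℂ) * w * ((starRingEnd ℂ) e)).re ≤
      ‖(d : ℂ) * w * ((starRingEnd ℂ) e)‖ * Real.cos φ := by
    have hre2 : ((d : ℂ) * w * ((starRingEnd ℂ) e)).re
        = d * (‖w‖ * Real.cos (α * π - ψ)) := by
      simp [Complex.mul_re, Complex.ofReal_re, Complex.ofReal_im, he_re, he_im,
        Real.cos_sub, hre, him]
      ring
    have habs2 : ‖(d : ℂ) * w * ((starRingEnd ℂ) e)‖ = d * ‖w‖ := by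
      rw [norm_mul, norm_mul, Complex.norm_conj, habse, Complex.norm_real, Real.norm_eq_abs,
        abs_of_nonneg hd, mul_one]
    rw [hre2, habs2, mul_assoc]
    apply mul_le_mul_of_nonneg_left _ hd
    apply mul_le_mul_of_nonneg_left _ hwabs.le
    exact cos_le_cos_aux (by positivity) (by nlinarith) (by linarith) (by nlinarith)
  calc X ^ 2 * Real.sin φ ^ 2 = (X * Real.sin φ) * (X * Real.sin φ) := by ring
    _ ≤ _ := mul_le_mul (abs_sub_lower hX h1 hsφ) (abs_sub_lower hX h2 hsφ)
        (by positivity) (norm_nonneg _)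

private lemma hsq_aux (α : ℝ) : ∀ x : ℝ, 0 ≤ x → x ^ (2 * α) = (x ^ α) ^ 2 := fun x hx => by
  rw [mul_comm, Real.rpow_mul hx, show ((2:ℝ)) = ((2:ℕ):ℝ) by norm_num, Real.rpow_natCast]

private lemma hDb_aux {α : ℝ} (hα : 0 < α) (hα' : α < 1) {w : ℂ} (hw : w ≠ 0)
    (harg : |w.arg| ≤ π * α / 2) {δ : ℝ} (hδ : 0 ≤ δ) {t : ℝ} (ht : 0 < t) :
    (t ^ α) ^ 2 * Real.sin (α * π / 2) ^ 2 ≤ ‖(t : ℂ) ^ ((2 * α : ℝ) : ℂ) -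
        2 * ((δ : ℂ) ^ (α : ℂ)) * ((t : ℂ) ^ (α : ℂ)) * w * Real.cos (α * π) +
        ((δ : ℂ) ^ ((2 * α : ℝ) : ℂ)) * w ^ 2‖ := by
  have e1 : (t:ℂ) ^ (α:ℂ) = ((t ^ α : ℝ) : ℂ) := (Complex.ofReal_cpow ht.le α).symm
  have e2 : (t:ℂ) ^ ((2*α:ℝ):ℂ) = (((t ^ α) ^ 2 : ℝ) : ℂ) := by
    rw [← hsq_aux α t ht.le]; exact (Complex.ofReal_cpow ht.le _).symm
  have e3 : (δ:ℂ) ^ (α:ℂ) = ((δ ^ α : ℝ) : ℂ) := (Complex.ofReal_cpow hδ α).symm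
  have e4 : (δ:ℂ) ^ ((2*α:ℝ):ℂ) = (((δ ^ α) ^ 2 : ℝ) : ℂ) := by
    rw [← hsq_aux α δ hδ]; exact (Complex.ofReal_cpow hδ _).symm
  rw [e2, e1, e3, e4, Complex.ofReal_pow, Complex.ofReal_pow]
  exact denom_bound hα hα' hw harg (Real.rpow_nonneg ht.le α) (Real.rpow_nonneg hδ α)

private lemma hsin_aux {α : ℝ} (hα : 0 < α) (hα' : α < 1) : 0 < Real.sin (α * π / 2) := by
  have hπ := Real.pi_pos
  exact Real.sin_pos_of_pos_of_lt_pi (by positivity) (by nlinarith)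

private lemma hDpos_aux {α : ℝ} (hα : 0 < α) (hα' : α < 1) {w : ℂ} (hw : w ≠ 0)
    (harg : |w.arg| ≤ π * α / 2) {δ : ℝ} (hδ : 0 ≤ δ) {t : ℝ} (ht : 0 < t) :
    ((t : ℂ) ^ ((2 * α : ℝ) : ℂ) -
        2 * ((δ : ℂ) ^ (α : ℂ)) * ((t : ℂ) ^ (α : ℂ)) * w * Real.cos (α * π) +
        ((δ : ℂ) ^ ((2 * α : ℝ) : ℂ)) * w ^ 2) ≠ 0 := by
  have h1 := hDb_aux hα hα' hw harg hδ ht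
  have hX := Real.rpow_pos_of_pos ht α
  have hs := hsin_aux hα hα'
  have h2 : 0 < (t ^ α) ^ 2 * Real.sin (α * π / 2) ^ 2 := by positivity
  intro h
  rw [h, norm_zero] at h1
  linarith

private lemma hbound_aux {α : ℝ} (hα : 0 < α) (hα' : α < 1) {w : ℂ} (hw : w ≠ 0)
    (harg : |w.arg| ≤ π * α / 2) {δ : ℝ} (hδ : 0 < δ) {t : ℝ} (ht : 0 < t) :
    ‖((t : ℂ) ^ (α : ℂ) * Complex.exp (-(t : ℂ))) /
        ((t : ℂ) ^ ((2 * α : ℝ) : ℂ) -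
          2 * ((δ : ℂ) ^ (α : ℂ)) * ((t : ℂ) ^ (α : ℂ)) * w * Real.cos (α * π) +
          ((δ : ℂ) ^ ((2 * α : ℝ) : ℂ)) * w ^ 2)‖ ≤
      (Real.sin (α * π / 2) ^ 2)⁻¹ * (Real.exp (-t) * t ^ ((1 - α) - 1)) := by
  have hXpos : 0 < t ^ α := Real.rpow_pos_of_pos ht α
  have hs := hsin_aux hα hα'
  have hnum : ‖(t:ℂ)^(α:ℂ) * Complex.exp (-(t:ℂ))‖ = t^α * Real.exp (-t) := by
    rw [norm_mul, ← Complex.ofReal_cpow ht.le, Complex.norm_real, Real.norm_eq_abs,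
      abs_of_nonneg (Real.rpow_nonneg ht.le α), Complex.norm_exp]
    norm_num
  rw [norm_div, hnum]
  have hD := hDb_aux hα hα' hw harg hδ.le ht
  have hdenpos : 0 < (t ^ α) ^ 2 * Real.sin (α * π / 2) ^ 2 := by positivity
  calc t ^ α * Real.exp (-t) / ‖_‖
      ≤ t ^ α * Real.exp (-t) / ((t ^ α) ^ 2 * Real.sin (α * π / 2) ^ 2) := by
        gcongr
    _ = (Real.sin (α * π / 2) ^ 2)⁻¹ * (Real.exp (-t) * t ^ ((1 - α) - 1)) := by
        rw [show ((1:ℝ)-α)-1 = α - 2*α by ring, Real.rpow_sub ht, hsq_aux α t ht.le]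
        field_simp

private lemma hval_aux {α : ℝ} (t : ℝ) (ht : 0 < t) :
    ((t:ℂ)^(α:ℂ) * Complex.exp (-(t:ℂ))) / (t:ℂ)^((2*α:ℝ):ℂ)
      = ((Real.exp (-t) * t ^ ((1-α)-1) : ℝ):ℂ) := by
  rw [← Complex.ofReal_cpow ht.le, ← Complex.ofReal_cpow ht.le,
    show -(t:ℂ) = ((-t : ℝ):ℂ) by push_cast; ring, ← Complex.ofReal_exp]
  rw [show ((1:ℝ)-α)-1 = α - 2*α by ring, Real.rpow_sub ht]
  push_cast
  ring

private lemma htend_aux {β : ℝ} (hβ : 0 < β) :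
    Tendsto (fun δ:ℝ => ((δ:ℂ) ^ (β:ℂ))) (nhdsWithin 0 (Ioi 0)) (nhds 0) := by
  have hr : Tendsto (fun x:ℝ => x ^ β) (nhdsWithin 0 (Ioi 0)) (nhds 0) := by
    have hc := (Real.continuousAt_rpow_const 0 β (Or.inr hβ.le)).tendsto.mono_left
      (nhdsWithin_le_nhds (s := Ioi (0:ℝ)))
    simpa [Real.zero_rpow hβ.ne'] using hc
  have h2 : Tendsto (fun x:ℝ => ((x ^ β : ℝ):ℂ)) (nhdsWithin 0 (Ioi 0)) (nhds 0) := by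
    have := (Complex.continuous_ofReal.tendsto 0).comp hr
    simpa [Function.comp_def] using this
  apply Tendsto.congr' _ h2
  filter_upwards [eventually_mem_nhdsWithin] with x hx
  exact Complex.ofReal_cpow (le_of_lt hx) β

theorem stmt_7 (α : ℝ) (hα : 0 < α) (hα' : α < 1)
    (w : ℂ) (hw : w ≠ 0) (harg : |w.arg| ≤ π * α / 2)
    (f : ℝ → ℂ)
    (hf : ∀ δ : ℝ, 0 < δ →
      f δ = ∫ t in Ioi (0 : ℝ),
        ((t : ℂ) ^ (α : ℂ) * Complex.exp (-(t : ℂ))) /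
          ((t : ℂ) ^ ((2 * α : ℝ) : ℂ) -
            2 * ((δ : ℂ) ^ (α : ℂ)) * ((t : ℂ) ^ (α : ℂ)) * w * Real.cos (α * π) +
            ((δ : ℂ) ^ ((2 * α : ℝ) : ℂ)) * w ^ 2)) :
    (∀ δ : ℝ, 0 < δ →
      IntegrableOn
        (fun t : ℝ =>
          ((t : ℂ) ^ (α : ℂ) * Complex.exp (-(t : ℂ))) /
            ((t : ℂ) ^ ((2 * α : ℝ) : ℂ) -
              2 * ((δ : ℂ) ^ (α : ℂ)) * ((t : ℂ) ^ (α : ℂ)) * w * Real.cos (α * π) +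
              ((δ : ℂ) ^ ((2 * α : ℝ) : ℂ)) * w ^ 2))
        (Ioi 0) volume) ∧
    Tendsto f (nhdsWithin 0 (Ioi 0)) (nhds ((Real.Gamma (1 - α) : ℂ))) := by
  have h1α : (0:ℝ) < 1 - α := by linarith
  -- the dominating function
  have hgint : IntegrableOn
      (fun t : ℝ => (Real.sin (α * π / 2) ^ 2)⁻¹ * (Real.exp (-t) * t ^ ((1 - α) - 1)))
      (Ioi (0:ℝ)) :=
    (Real.GammaIntegral_convergent h1α).const_mul _
  -- measurability for each positive δ
  have hmeas : ∀ δ : ℝ, 0 < δ → AEStronglyMeasurable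
      (fun t : ℝ =>
        ((t : ℂ) ^ (α : ℂ) * Complex.exp (-(t : ℂ))) /
          ((t : ℂ) ^ ((2 * α : ℝ) : ℂ) -
            2 * ((δ : ℂ) ^ (α : ℂ)) * ((t : ℂ) ^ (α : ℂ)) * w * Real.cos (α * π) +
            ((δ : ℂ) ^ ((2 * α : ℝ) : ℂ)) * w ^ 2))
      (volume.restrict (Ioi 0)) := by
    intro δ hδ
    have hca : Continuous fun t:ℝ => (t:ℂ) ^ (α:ℂ) :=
      Complex.continuous_ofReal_cpow_const (by simpa using hα)
    have h2α : (0:ℝ) < 2 * α := by linarith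
    have hc2a : Continuous fun t:ℝ => (t:ℂ) ^ ((2*α:ℝ):ℂ) :=
      Complex.continuous_ofReal_cpow_const (by simpa using h2α)
    apply ContinuousOn.aestronglyMeasurable _ measurableSet_Ioi
    apply ContinuousOn.div
    · exact (hca.mul (Complex.continuous_exp.comp (Complex.continuous_ofReal.neg))).continuousOn
    · refine Continuous.continuousOn ?_
      apply Continuous.add _ continuous_const
      apply Continuous.sub hc2a
      exact ((continuous_const.mul hca).mul continuous_const).mul continuous_const
    · intro t ht
      exact hDpos_aux hα hα' hw harg hδ.le ht
  -- the ae bound for each positive δ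
  have hbd : ∀ δ : ℝ, 0 < δ → ∀ᵐ (t : ℝ) ∂(volume.restrict (Ioi (0:ℝ))),
      ‖((t : ℂ) ^ (α : ℂ) * Complex.exp (-(t : ℂ))) /
          ((t : ℂ) ^ ((2 * α : ℝ) : ℂ) -
            2 * ((δ : ℂ) ^ (α : ℂ)) * ((t : ℂ) ^ (α : ℂ)) * w * Real.cos (α * π) +
            ((δ : ℂ) ^ ((2 * α : ℝ) : ℂ)) * w ^ 2)‖ ≤
        (Real.sin (α * π / 2) ^ 2)⁻¹ * (Real.exp (-t) * t ^ ((1 - α) - 1)) := by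
    intro δ hδ
    refine (ae_restrict_iff' measurableSet_Ioi).2 (ae_of_all _ fun t ht => ?_)
    exact hbound_aux hα hα' hw harg hδ ht
  constructor
  · intro δ hδ
    exact Integrable.mono' hgint (hmeas δ hδ) (hbd δ hδ)
  · -- dominated convergence
    have h2α : (0:ℝ) < 2 * α := by linarith
    have key := MeasureTheory.tendsto_integral_filter_of_dominated_convergence
      (μ := volume.restrict (Ioi (0:ℝ))) (l := nhdsWithin (0:ℝ) (Ioi 0))
      (F := fun δ t =>
        ((t : ℂ) ^ (α : ℂ) * Complex.exp (-(t : ℂ))) /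
          ((t : ℂ) ^ ((2 * α : ℝ) : ℂ) -
            2 * ((δ : ℂ) ^ (α : ℂ)) * ((t : ℂ) ^ (α : ℂ)) * w * Real.cos (α * π) +
            ((δ : ℂ) ^ ((2 * α : ℝ) : ℂ)) * w ^ 2))
      (f := fun t : ℝ => ((Real.exp (-t) * t ^ ((1 - α) - 1) : ℝ) : ℂ))
      (fun t : ℝ => (Real.sin (α * π / 2) ^ 2)⁻¹ * (Real.exp (-t) * t ^ ((1 - α) - 1)))
      (eventually_mem_nhdsWithin.mono fun δ hδ => hmeas δ hδ)
      (eventually_mem_nhdsWithin.mono fun δ hδ => hbd δ hδ)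
      hgint
      ?_
    · have hint : (∫ t in Ioi (0:ℝ), ((Real.exp (-t) * t ^ ((1 - α) - 1) : ℝ) : ℂ))
          = ((Real.Gamma (1 - α) : ℝ) : ℂ) := by
        rw [Real.Gamma_eq_integral h1α]
        exact integral_ofReal
      rw [hint] at key
      apply key.congr'
      filter_upwards [eventually_mem_nhdsWithin] with δ hδ
      exact (hf δ hδ).symm
    · refine (ae_restrict_iff' measurableSet_Ioi).2 (ae_of_all _ fun t ht => ?_)
      have ht' : (0:ℝ) < t := ht
      have h0 := htend_aux hα
      have h0' := htend_aux h2α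
      have hB : Tendsto (fun δ:ℝ => 2 * ((δ:ℂ) ^ (α:ℂ)) * ((t:ℂ) ^ (α:ℂ)) * w
          * (Real.cos (α*π) : ℂ)) (nhdsWithin 0 (Ioi 0)) (nhds 0) := by
        have := (((h0.const_mul (2:ℂ)).mul_const ((t:ℂ) ^ (α:ℂ))).mul_const w).mul_const
          ((Real.cos (α*π) : ℂ))
        simpa using this
      have hC : Tendsto (fun δ:ℝ => ((δ:ℂ) ^ ((2*α:ℝ):ℂ)) * w^2)
          (nhdsWithin 0 (Ioi 0)) (nhds 0) := by
        have := h0'.mul_const (w^2)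
        simpa using this
      have hD : Tendsto (fun δ:ℝ => (t : ℂ) ^ ((2 * α : ℝ) : ℂ) -
            2 * ((δ : ℂ) ^ (α : ℂ)) * ((t : ℂ) ^ (α : ℂ)) * w * Real.cos (α * π) +
            ((δ : ℂ) ^ ((2 * α : ℝ) : ℂ)) * w ^ 2)
          (nhdsWithin 0 (Ioi 0)) (nhds ((t : ℂ) ^ ((2 * α : ℝ) : ℂ))) := by
        have := (tendsto_const_nhds (x := (t : ℂ) ^ ((2 * α : ℝ) : ℂ))
          (f := nhdsWithin (0:ℝ) (Ioi 0))).sub hB |>.add hC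
        simpa using this
      have hDne : (t:ℂ) ^ ((2*α:ℝ):ℂ) ≠ 0 := by
        rw [← Complex.ofReal_cpow ht'.le]
        exact_mod_cast (Real.rpow_pos_of_pos ht' (2*α)).ne'
      have h2 := (hD.inv₀ hDne).const_mul ((t:ℂ) ^ (α:ℂ) * Complex.exp (-(t:ℂ)))
      simp only [← div_eq_mul_inv] at h2
      show Tendsto (fun δ : ℝ => ((t : ℂ) ^ (α : ℂ) * Complex.exp (-(t : ℂ))) /
          ((t : ℂ) ^ ((2 * α : ℝ) : ℂ) -
            2 * ((δ : ℂ) ^ (α : ℂ)) * ((t : ℂ) ^ (α : ℂ)) * w * Real.cos (α * π) +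
            ((δ : ℂ) ^ ((2 * α : ℝ) : ℂ)) * w ^ 2))
        (nhdsWithin 0 (Ioi 0)) (nhds (((Real.exp (-t) * t ^ ((1 - α) - 1) : ℝ) : ℂ)))
      rw [← hval_aux (α := α) t ht']
      exact h2
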